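/- Let S be a finite set of lines (1-dimensional linear subspaces) in a k-dimensional Euclidean vector space 𝔱, consisting of l > k elements whose union spans 𝔱. Suppose Q is a finite subgroup of the orthogonal group O(𝔱) that leaves S invariant and acts on S as the full permutation group of S. Then l = k + 1, and the lines of S are spanned by the vertices of a regular simplex centered at the origin in 𝔱 (i.e., one can choose unit vectors, one on each line, with all pairwise inner products equal to -1/k). -/

import Mathlib

open scoped RealInnerProductSpace

lemma exists_perm_pair' {α : Type*} [DecidableEq α] {a b a' b' : α} (h : a ≠ b) (h' : a' ≠ b') :
    ∃ σ : Equiv.Perm α, σ a = a' ∧ σ b = b' := by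
  set σ1 := Equiv.swap a a' with hσ1
  have h1a : σ1 a = a' := Equiv.swap_apply_left a a'
  have hb1 : σ1 b ≠ a' := fun hc => h (σ1.injective (hc.trans h1a.symm)).symm
  refine ⟨(Equiv.swap (σ1 b) b') * σ1, ?_, ?_⟩
  · simp only [Equiv.Perm.mul_apply, h1a]
    exact Equiv.swap_apply_of_ne_of_ne (Ne.symm hb1) h'
  · simp only [Equiv.Perm.mul_apply]
    exact Equiv.swap_apply_left _ _

lemma exists_perm_triple' {α : Type*} [DecidableEq α] {a b c a' b' c' : α}
    (hab : a ≠ b) (hac : a ≠ c) (hbc : b ≠ c)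
    (hab' : a' ≠ b') (hac' : a' ≠ c') (hbc' : b' ≠ c') :
    ∃ σ : Equiv.Perm α, σ a = a' ∧ σ b = b' ∧ σ c = c' := by
  obtain ⟨σ, hσa, hσb⟩ := exists_perm_pair' hab hab'
  have h1 : σ c ≠ a' := fun hc => hac (σ.injective (hc.trans hσa.symm)).symm
  have h2 : σ c ≠ b' := fun hc => hbc (σ.injective (hc.trans hσb.symm)).symm
  refine ⟨(Equiv.swap (σ c) c') * σ, ?_, ?_, ?_⟩
  · simp only [Equiv.Perm.mul_apply, hσa]
    exact Equiv.swap_apply_of_ne_of_ne (Ne.symm h1) hac'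
  · simp only [Equiv.Perm.mul_apply, hσb]
    exact Equiv.swap_apply_of_ne_of_ne (Ne.symm h2) hbc'
  · simp only [Equiv.Perm.mul_apply]
    exact Equiv.swap_apply_left _ _

set_option maxHeartbeats 1600000 in
theorem stmt0 {E : Type*} [NormedAddCommGroup E] [InnerProductSpace ℝ E]
    [FiniteDimensional ℝ E] (k l : ℕ) (hk : 2 ≤ k)
    (hdim : Module.finrank ℝ E = k)
    (S : Finset (Submodule ℝ E))
    (hlines : ∀ L ∈ S, Module.finrank ℝ L = 1)
    (hcard : S.card = l) (hl : k < l)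
    (hspan : Submodule.span ℝ (⋃ L ∈ S, (L : Set E)) = ⊤)
    (Q : Subgroup (E ≃ₗᵢ[ℝ] E)) (hQfin : Finite Q)
    (hinv : ∀ q ∈ Q, ∀ L ∈ S, L.map (q.toLinearEquiv : E →ₗ[ℝ] E) ∈ S)
    (hperm : ∀ σ : Equiv.Perm {L // L ∈ S}, ∃ q ∈ Q,
      ∀ L : {L // L ∈ S},
        (L : Submodule ℝ E).map (q.toLinearEquiv : E →ₗ[ℝ] E) = (σ L : Submodule ℝ E)) :
    l = k + 1 ∧ ∃ f : {L // L ∈ S} → E,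
      (∀ L, ‖f L‖ = 1 ∧ f L ∈ (L : Submodule ℝ E)) ∧
      ∀ L L', L ≠ L' → ⟪f L, f L'⟫ = -(1 / (k : ℝ)) := by
  classical
  have hcardι : Fintype.card {L // L ∈ S} = l := by rw [Fintype.card_coe, hcard]
  have hl3 : 3 ≤ l := by omega
  -- choose unit vectors
  have hex : ∀ L : {L // L ∈ S}, ∃ v : E, ‖v‖ = 1 ∧ v ∈ (L : Submodule ℝ E) := by
    intro L
    have h1 : (L : Submodule ℝ E) ≠ ⊥ := by
      intro h
      have h2 := hlines L L.2
      rw [h, finrank_bot] at h2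
      exact one_ne_zero h2.symm
    obtain ⟨v, hv, hv0⟩ := Submodule.exists_mem_ne_zero_of_ne_bot h1
    refine ⟨‖v‖⁻¹ • v, ?_, Submodule.smul_mem _ _ hv⟩
    rw [norm_smul, norm_inv, norm_norm, inv_mul_cancel₀ (norm_ne_zero_iff.2 hv0)]
  choose f0 hf0norm hf0mem using hex
  have hf0ne : ∀ L, f0 L ≠ 0 := by
    intro L h
    have := hf0norm L
    rw [h, norm_zero] at this
    exact one_ne_zero this.symm
  have hspanf : ∀ L : {L // L ∈ S}, (L : Submodule ℝ E) = Submodule.span ℝ {f0 L} := by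
    intro L
    refine (Submodule.eq_of_le_of_finrank_le ?_ ?_).symm
    · rw [Submodule.span_singleton_le_iff_mem]; exact hf0mem L
    · rw [hlines L L.2, finrank_span_singleton (hf0ne L)]
  -- lines are determined by their unit vectors up to sign
  have hinj : ∀ a b : {L // L ∈ S}, (∃ r : ℝ, f0 b = r • f0 a) → a = b := by
    intro a b ⟨r, hr⟩
    have hr0 : r ≠ 0 := by
      intro h; rw [h, zero_smul] at hr; exact hf0ne b hr
    apply Subtype.ext
    rw [hspanf a, hspanf b, hr, Submodule.span_singleton_smul_eq (IsUnit.mk0 r hr0)]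
  -- key invariance: every permutation is realized up to signs
  have key : ∀ σ : Equiv.Perm {L // L ∈ S}, ∃ r : {L // L ∈ S} → ℝ,
      (∀ L, r L * r L = 1) ∧
      ∀ a b : {L // L ∈ S}, ⟪f0 a, f0 b⟫ = (r a * r b) * ⟪f0 (σ a), f0 (σ b)⟫ := by
    intro σ
    obtain ⟨q, hqQ, hq⟩ := hperm σ
    have hr : ∀ L : {L // L ∈ S}, ∃ r : ℝ, q (f0 L) = r • f0 (σ L) := by
      intro L
      have hm : q (f0 L) ∈ ((σ L : {L // L ∈ S}) : Submodule ℝ E) := by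
        rw [← hq L]
        exact ⟨f0 L, hf0mem L, rfl⟩
      rw [hspanf (σ L), Submodule.mem_span_singleton] at hm
      obtain ⟨r, hr⟩ := hm
      exact ⟨r, hr.symm⟩
    choose r hrr using hr
    have habsr : ∀ L, |r L| = 1 := by
      intro L
      have h1 : ‖q (f0 L)‖ = 1 := by rw [q.norm_map]; exact hf0norm L
      rw [hrr L, norm_smul, hf0norm (σ L), mul_one, Real.norm_eq_abs] at h1
      exact h1
    refine ⟨r, fun L => by rw [← abs_mul_abs_self (r L), habsr L, mul_one], ?_⟩
    intro a b
    have h2 := q.inner_map_map (f0 a) (f0 b)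
    rw [hrr a, hrr b, real_inner_smul_left, real_inner_smul_right] at h2
    rw [← h2]; ring
  -- extract previous signs abs
  have keyabs : ∀ σ : Equiv.Perm {L // L ∈ S}, ∀ a b : {L // L ∈ S},
      |⟪f0 a, f0 b⟫| = |⟪f0 (σ a), f0 (σ b)⟫| := by
    intro σ a b
    obtain ⟨r, hr1, hr2⟩ := key σ
    have habsr : ∀ L, |r L| = 1 := by
      intro L
      rcases mul_self_eq_one_iff.1 (hr1 L) with h | h <;> rw [h] <;> norm_num
    rw [hr2 a b, abs_mul, abs_mul, habsr a, habsr b, one_mul, one_mul]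
  -- pick three distinct lines
  obtain ⟨a0, b0, hab0⟩ := Fintype.exists_pair_of_one_lt_card
    (α := {L // L ∈ S}) (by rw [hcardι]; omega)
  have hc0ex : ∃ c0 : {L // L ∈ S}, c0 ≠ a0 ∧ c0 ≠ b0 := by
    have h1 : ((Finset.univ : Finset {L // L ∈ S}) \ {a0, b0}).Nonempty := by
      rw [← Finset.card_pos, Finset.card_sdiff_of_subset (Finset.subset_univ _)]
      have h2 : ({a0, b0} : Finset {L // L ∈ S}).card ≤ 2 :=
        (Finset.card_insert_le _ _).trans (by simp)
      have h3 : (Finset.univ : Finset {L // L ∈ S}).card = l := by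
        rw [Finset.card_univ, hcardι]
      omega
    obtain ⟨c0, hc0⟩ := h1
    simp only [Finset.mem_sdiff, Finset.mem_univ, Finset.mem_insert,
      Finset.mem_singleton, true_and, not_or] at hc0
    exact ⟨c0, hc0.1, hc0.2⟩
  obtain ⟨c0, hc0a, hc0b⟩ := hc0ex
  set c : ℝ := |⟪f0 a0, f0 b0⟫| with hc
  -- constancy of absolute inner products
  have habs : ∀ a b : {L // L ∈ S}, a ≠ b → |⟪f0 a, f0 b⟫| = c := by
    intro a b hab
    obtain ⟨σ, hσ1, hσ2⟩ := exists_perm_pair' hab hab0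
    rw [hc, ← hσ1, ← hσ2]
    exact keyabs σ a b
  -- c ≠ 0
  have hcpos : 0 < c := by
    rcases (abs_nonneg ⟪f0 a0, f0 b0⟫).lt_or_eq with h | h
    · exact h
    · exfalso
      have hc0 : c = 0 := h.symm
      have hon : Orthonormal ℝ f0 := by
        rw [orthonormal_iff_ite]
        intro i j
        by_cases hij : i = j
        · subst hij
          rw [real_inner_self_eq_norm_mul_norm, hf0norm i, mul_one]
          simp
        · rw [if_neg hij]
          have h2 := habs i j hij
          rw [hc0] at h2
          exact abs_eq_zero.1 h2
      have hle := hon.linearIndependent.fintype_card_le_finrank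
      rw [hcardι, hdim] at hle
      omega
  -- c < 1
  have hclt : c < 1 := by
    rcases lt_or_eq_of_le ((abs_real_inner_le_norm (f0 a0) (f0 b0)).trans
      (by rw [hf0norm a0, hf0norm b0, mul_one])) with h | h
    · exact h
    · exfalso
      apply hab0
      apply hinj
      rcases (abs_eq (by norm_num : (0:ℝ) ≤ 1)).1 h with h1 | h1
      · have h2 : ⟪f0 a0, f0 b0⟫ = ‖f0 a0‖ * ‖f0 b0‖ := by
          rw [hf0norm a0, hf0norm b0, mul_one]; exact h1
        have h3 := inner_eq_norm_mul_iff_real.1 h2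
        rw [hf0norm a0, hf0norm b0, one_smul, one_smul] at h3
        exact ⟨1, by rw [one_smul, h3]⟩
      · have h2 : ⟪f0 a0, -f0 b0⟫ = ‖f0 a0‖ * ‖-f0 b0‖ := by
          simp [inner_neg_right, h1, norm_neg, hf0norm]
        have h3 := inner_eq_norm_mul_iff_real.1 h2
        rw [hf0norm a0, norm_neg, hf0norm b0, one_smul, one_smul] at h3
        exact ⟨-1, by rw [neg_smul, one_smul, h3, neg_neg]⟩
  -- triangle product constancy
  set P : ℝ := ⟪f0 a0, f0 b0⟫ * ⟪f0 b0, f0 c0⟫ * ⟪f0 c0, f0 a0⟫ with hP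
  have htri : ∀ a b c' : {L // L ∈ S}, a ≠ b → a ≠ c' → b ≠ c' →
      ⟪f0 a, f0 b⟫ * ⟪f0 b, f0 c'⟫ * ⟪f0 c', f0 a⟫ = P := by
    intro a b c' hab hac hbc
    obtain ⟨σ, hσ1, hσ2, hσ3⟩ := exists_perm_triple' hab hac hbc hab0 (Ne.symm hc0a) (Ne.symm hc0b)
    obtain ⟨r, hr1, hr2⟩ := key σ
    rw [hr2 a b, hr2 b c', hr2 c' a, hσ1, hσ2, hσ3]
    have : r a * r b * ⟪f0 a0, f0 b0⟫ * (r b * r c' * ⟪f0 b0, f0 c0⟫) *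
        (r c' * r a * ⟪f0 c0, f0 a0⟫) =
        (r a * r a) * ((r b * r b) * ((r c' * r c') *
          (⟪f0 a0, f0 b0⟫ * ⟪f0 b0, f0 c0⟫ * ⟪f0 c0, f0 a0⟫))) := by ring
    rw [this, hr1 a, hr1 b, hr1 c', one_mul, one_mul, one_mul, hP]
  -- sign-normalized vectors g
  have hx0 : ∀ L, L ≠ a0 → ⟪f0 a0, f0 L⟫ ≠ 0 := by
    intro L h h0
    have hx := habs a0 L (Ne.symm h)
    rw [h0, abs_zero] at hx
    exact hcpos.ne hx
  set ε : {L // L ∈ S} → ℝ := fun L => if L = a0 then 1 else -c / ⟪f0 a0, f0 L⟫ with hεdef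
  have hεsq : ∀ L, ε L * ε L = 1 := by
    intro L
    by_cases h : L = a0
    · simp [hεdef, h]
    · have hx : |⟪f0 a0, f0 L⟫| = c := habs a0 L (Ne.symm h)
      have hxx : ⟪f0 a0, f0 L⟫ * ⟪f0 a0, f0 L⟫ = c * c := by
        rw [← abs_mul_abs_self ⟪f0 a0, f0 L⟫, hx]
      simp only [hεdef, if_neg h]
      rw [div_mul_div_comm, neg_mul_neg, hxx, div_self (by positivity)]
  have hεabs : ∀ L, |ε L| = 1 := by
    intro L
    rcases mul_self_eq_one_iff.1 (hεsq L) with h | h <;> rw [h] <;> norm_num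
  set g : {L // L ∈ S} → E := fun L => ε L • f0 L with hgdef
  have hgnorm : ∀ L, ‖g L‖ = 1 := by
    intro L
    show ‖ε L • f0 L‖ = 1
    rw [norm_smul, hf0norm, mul_one, Real.norm_eq_abs, hεabs]
  have hgmem : ∀ L : {L // L ∈ S}, g L ∈ (L : Submodule ℝ E) := fun L => Submodule.smul_mem _ _ (hf0mem L)
  have hginner : ∀ a b, ⟪g a, g b⟫ = ε a * ε b * ⟪f0 a, f0 b⟫ := by
    intro a b
    show ⟪ε a • f0 a, ε b • f0 b⟫ = _
    rw [real_inner_smul_left, real_inner_smul_right]; ring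
  have hgself : ∀ a, ⟪g a, g a⟫ = 1 := by
    intro a
    rw [real_inner_self_eq_norm_mul_norm, hgnorm, mul_one]
  have hgabs : ∀ a b, a ≠ b → |⟪g a, g b⟫| = c := by
    intro a b hab
    rw [hginner, abs_mul, abs_mul, hεabs a, hεabs b, one_mul, one_mul]
    exact habs a b hab
  have hgL0 : ∀ L, L ≠ a0 → ⟪g a0, g L⟫ = -c := by
    intro L h
    rw [hginner]
    simp only [hεdef, if_pos rfl, if_neg h]
    field_simp
    rw [div_self (hx0 L h)]
  have hgtri : ∀ a b L, a ≠ b → a ≠ L → b ≠ L →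
      ⟪g a, g b⟫ * ⟪g b, g L⟫ * ⟪g L, g a⟫ = P := by
    intro a b L h1 h2 h3
    rw [hginner, hginner, hginner]
    have h4 := htri a b L h1 h2 h3
    have h5 : ε a * ε b * ⟪f0 a, f0 b⟫ * (ε b * ε L * ⟪f0 b, f0 L⟫) *
        (ε L * ε a * ⟪f0 L, f0 a⟫) =
        (ε a * ε a) * ((ε b * ε b) * ((ε L * ε L) *
          (⟪f0 a, f0 b⟫ * ⟪f0 b, f0 L⟫ * ⟪f0 L, f0 a⟫))) := by ring
    rw [h5, hεsq a, hεsq b, hεsq L, one_mul, one_mul, one_mul, h4]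
  set d : ℝ := ⟪g b0, g c0⟫ with hddef
  have hoff : ∀ a b, a ≠ a0 → b ≠ a0 → a ≠ b → ⟪g a, g b⟫ = d := by
    intro a b ha hb hab
    have h1 := hgtri a b a0 hab ha hb
    have h2 := hgtri b0 c0 a0 (Ne.symm hc0b) (Ne.symm hab0) hc0a
    rw [real_inner_comm (g a0) (g b)] at h1
    rw [hgL0 b hb] at h1
    rw [hgL0 a ha] at h1
    rw [real_inner_comm (g a0) (g c0)] at h2
    rw [hgL0 c0 hc0a] at h2
    rw [hgL0 b0 (Ne.symm hab0)] at h2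
    have h3 : ⟪g a, g b⟫ * (c * c) = d * (c * c) := by
      rw [hddef]; nlinarith [h1, h2]
    exact mul_right_cancel₀ (by positivity) h3
  have hdval : d = c ∨ d = -c := by
    have h1 := hgabs b0 c0 (Ne.symm hc0b)
    exact (abs_eq hcpos.le).1 h1
  -- linear dependence since l > k
  have hdep : ¬ LinearIndependent ℝ g := by
    intro h
    have h2 := h.fintype_card_le_finrank
    rw [hcardι, hdim] at h2
    omega
  rw [Fintype.not_linearIndependent_iff] at hdep
  obtain ⟨w, hw, i0, hi0⟩ := hdep
  have heq : ∀ j, ∑ i, w i * ⟪g j, g i⟫ = 0 := by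
    intro j
    have h1 : ⟪g j, ∑ i, w i • g i⟫ = 0 := by rw [hw, inner_zero_right]
    rw [inner_sum] at h1
    simpa only [real_inner_smul_right] using h1
  have eq0 : w a0 * 1 + ((∑ i, w i) - w a0) * (-c) = 0 := by
    have h1 := heq a0
    rw [← Finset.add_sum_erase _ _ (Finset.mem_univ a0)] at h1
    have h2 : ∑ i ∈ Finset.univ.erase a0, w i * ⟪g a0, g i⟫
        = ∑ i ∈ Finset.univ.erase a0, w i * (-c) := by
      refine Finset.sum_congr rfl fun i hi => ?_
      rw [hgL0 i (Finset.ne_of_mem_erase hi)]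
    rw [h2, ← Finset.sum_mul, Finset.sum_erase_eq_sub (Finset.mem_univ a0),
      hgself a0] at h1
    linear_combination h1
  have eqj : ∀ j, j ≠ a0 →
      w j * 1 + w a0 * (-c) + ((∑ i, w i) - w j - w a0) * d = 0 := by
    intro j hj
    have h1 := heq j
    rw [← Finset.add_sum_erase _ _ (Finset.mem_univ j)] at h1
    have ha0m : a0 ∈ Finset.univ.erase j := Finset.mem_erase.2 ⟨Ne.symm hj, Finset.mem_univ _⟩
    rw [← Finset.add_sum_erase _ _ ha0m] at h1
    have h2 : ∑ i ∈ (Finset.univ.erase j).erase a0, w i * ⟪g j, g i⟫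
        = ∑ i ∈ (Finset.univ.erase j).erase a0, w i * d := by
      refine Finset.sum_congr rfl fun i hi => ?_
      have hia0 : i ≠ a0 := Finset.ne_of_mem_erase hi
      have hij : i ≠ j := Finset.ne_of_mem_erase (Finset.mem_of_mem_erase hi)
      rw [hoff j i hj hia0 (Ne.symm hij)]
    rw [h2, ← Finset.sum_mul, Finset.sum_erase_eq_sub ha0m,
      Finset.sum_erase_eq_sub (Finset.mem_univ j), hgself j,
      real_inner_comm (g a0) (g j), hgL0 j hj] at h1
    linear_combination h1
  have hcard_erase : ((Finset.univ : Finset {L // L ∈ S}).erase a0).card = l - 1 := by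
    rw [Finset.card_erase_of_mem (Finset.mem_univ a0), Finset.card_univ, hcardι]
  have hcastl : (((l - 1 : ℕ)) : ℝ) = (l : ℝ) - 1 := by
    have : 1 ≤ l := by omega
    push_cast [this]
    ring
  -- rule out d = c
  have hdc : d = -c := by
    rcases hdval with hd1 | hd1
    · exfalso
      have hEj : ∀ j ∈ (Finset.univ : Finset {L // L ∈ S}).erase a0,
          w j * (1 - c) = 2 * c * w a0 - c * (∑ i, w i) := by
        intro j hj
        have := eqj j (Finset.ne_of_mem_erase hj)
        rw [hd1] at this
        linear_combination this
      have hsum := Finset.sum_congr rfl hEj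
      rw [← Finset.sum_mul, Finset.sum_erase_eq_sub (Finset.mem_univ a0),
        Finset.sum_const, hcard_erase, nsmul_eq_mul, hcastl] at hsum
      have hkey : (∑ i, w i) * ((1 - c) * (1 + ((l : ℝ) - 1) * c)) = 0 := by
        linear_combination (1 + c) * hsum + ((1 - c) + 2 * c * ((l : ℝ) - 1)) * eq0
      have hfac : (1 - c) * (1 + ((l : ℝ) - 1) * c) ≠ 0 := by
        have h3 : (3 : ℝ) ≤ (l : ℝ) := by exact_mod_cast hl3
        have hp1 : (0:ℝ) < 1 - c := by linarith
        have hp2 : (0:ℝ) < 1 + ((l : ℝ) - 1) * c := by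
          nlinarith [mul_pos (show (0:ℝ) < (l:ℝ) - 1 by linarith) hcpos]
        exact (mul_pos hp1 hp2).ne'
      have hT0 : (∑ i, w i) = 0 := by
        rcases mul_eq_zero.1 hkey with h | h
        · exact h
        · exact absurd h hfac
      have hwa0 : w a0 = 0 := by
        rw [hT0] at eq0
        nlinarith [eq0, hcpos]
      have hwj : ∀ j, w j = 0 := by
        intro j
        by_cases hj : j = a0
        · rw [hj]; exact hwa0
        · have h4 := hEj j (Finset.mem_erase.2 ⟨hj, Finset.mem_univ _⟩)
          rw [hT0, hwa0] at h4
          have h5 : (1 : ℝ) - c ≠ 0 := by linarith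
          have h6 : w j * (1 - c) = 0 := by linear_combination h4
          exact (mul_eq_zero.1 h6).resolve_right h5
      exact hi0 (hwj i0)
    · exact hd1
  -- all coefficients equal
  have hall : ∀ i, w i * (1 + c) = c * (∑ i, w i) := by
    intro i
    by_cases hi : i = a0
    · rw [hi]; linear_combination eq0
    · have := eqj i hi
      rw [hdc] at this
      linear_combination this
  have hTAne : (∑ i, w i) ≠ 0 := by
    intro h
    apply hi0
    have h1 := hall i0
    rw [h, mul_zero] at h1
    have h2 : (1 : ℝ) + c ≠ 0 := by linarith
    exact (mul_eq_zero.1 h1).resolve_right h2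
  have hcn : 1 + c = (l : ℝ) * c := by
    have hsum := Finset.sum_congr rfl (fun i (_ : i ∈ Finset.univ) => hall i)
    rw [← Finset.sum_mul, Finset.sum_const, Finset.card_univ, hcardι,
      nsmul_eq_mul] at hsum
    have h1 : ((1 : ℝ) + c) * (∑ i, w i) = ((l : ℝ) * c) * (∑ i, w i) := by
      linear_combination hsum
    exact mul_right_cancel₀ hTAne h1
  -- linear independence of the family omitting a0
  have hin2 : ∀ (b : {i : {L // L ∈ S} // i ≠ a0} → ℝ),
      (∑ i, b i • g i.val) = 0 → ∀ j' : {L // L ∈ S},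
      ∑ i, b i * ⟪g j', g i.val⟫ = 0 := by
    intro b hb j'
    have h1 : ⟪g j', ∑ i, b i • g i.val⟫ = 0 := by rw [hb, inner_zero_right]
    rw [inner_sum] at h1
    simpa only [real_inner_smul_right] using h1
  have hli : LinearIndependent ℝ (fun i : {i : {L // L ∈ S} // i ≠ a0} => g i.val) := by
    rw [Fintype.linearIndependent_iff]
    intro b hb
    have hSb : ∑ i, b i = 0 := by
      have h1 := hin2 b hb a0
      have h2 : ∑ i : {i : {L // L ∈ S} // i ≠ a0}, b i * ⟪g a0, g i.val⟫
          = ∑ i : {i : {L // L ∈ S} // i ≠ a0}, b i * (-c) := by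
        refine Finset.sum_congr rfl fun i _ => ?_
        rw [hgL0 i.val i.prop]
      rw [h2, ← Finset.sum_mul] at h1
      rcases mul_eq_zero.1 h1 with h | h
      · exact h
      · exact absurd h (by linarith)
    intro j
    have h1 := hin2 b hb j.val
    rw [← Finset.add_sum_erase _ _ (Finset.mem_univ j)] at h1
    have h2 : ∑ i ∈ Finset.univ.erase j, b i * ⟪g j.val, g i.val⟫
        = ∑ i ∈ Finset.univ.erase j, b i * (-c) := by
      refine Finset.sum_congr rfl fun i hi => ?_
      have hij : i ≠ j := Finset.ne_of_mem_erase hi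
      have hvij : (j : {L // L ∈ S}) ≠ (i : {L // L ∈ S}) :=
        fun h => hij (Subtype.ext h.symm)
      rw [hoff j.val i.val j.prop i.prop hvij, hdc]
    rw [h2, ← Finset.sum_mul, Finset.sum_erase_eq_sub (Finset.mem_univ j),
      hSb, hgself] at h1
    have h3 : b j * (1 + c) = 0 := by linear_combination h1
    have h4 : (1 : ℝ) + c ≠ 0 := by linarith
    exact (mul_eq_zero.1 h3).resolve_right h4
  have hcard2 : Fintype.card {i : {L // L ∈ S} // i ≠ a0} = l - 1 := by
    have h1 := Fintype.card_subtype_compl (fun i : {L // L ∈ S} => i = a0)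
    rw [Fintype.card_subtype_eq, hcardι] at h1
    exact h1
  have hle2 := hli.fintype_card_le_finrank
  rw [hcard2, hdim] at hle2
  have hlk : l = k + 1 := by omega
  have hck : (k : ℝ) * c = 1 := by
    have h1 : (l : ℝ) = (k : ℝ) + 1 := by rw [hlk]; push_cast; ring
    rw [h1] at hcn
    linarith [hcn]
  refine ⟨hlk, g, fun L => ⟨hgnorm L, hgmem L⟩, ?_⟩
  intro L L' hne
  have hkne : (k : ℝ) ≠ 0 := by
    have : (2 : ℝ) ≤ (k : ℝ) := by exact_mod_cast hk
    linarith
  have hval : ⟪g L, g L'⟫ = -c := by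
    by_cases h1 : L = a0
    · rw [h1]
      exact hgL0 L' (h1 ▸ (Ne.symm hne) : L' ≠ a0)
    · by_cases h2 : L' = a0
      · rw [h2, real_inner_comm (g a0) (g L)]
        exact hgL0 L h1
      · rw [hoff L L' h1 h2 hne, hdc]
  rw [hval]
  have : c = 1 / (k : ℝ) := by
    field_simp
    linarith [hck]
  rw [this]
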